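/- arXiv:2601.23274 — 5 statements merged into one kernel-verified Lean document; each statement's English description precedes it below -/
import Mathlib

section
/- Let C be a cycle in a simple graph G whose length equals the girth of G, with |C| ≥ 7. Then for every two adjacent vertices u, v both outside V(C), the total number of neighbors of u on C plus the number of neighbors of v on C is at most 1. -/
open Classical Finset

/-!
Two vertices of `C` are joined by an arc of `C` of length at most `|C| / 2`. Closing such an arc
through a vertex `u` off `C` with two neighbours on `C`, or through an edge `uv` off `C` whose ends
both have a neighbour on `C`, gives a cycle of length at most `|C| / 2 + 3 < |C|`, contradicting
the minimality of `C`.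
-/

namespace SimpleGraph.Walk

variable {V : Type*} {G : SimpleGraph V}

lemma exists_isPath_support_subset_two_mul_length_le {c x y : V} (C : G.Walk c c)
    (hx : x ∈ C.support) (hy : y ∈ C.support) :
    ∃ p : G.Walk x y, p.IsPath ∧ p.support ⊆ C.support ∧ 2 * p.length ≤ C.length := by
  suffices ∃ q : G.Walk x y, q.support ⊆ C.support ∧ 2 * q.length ≤ C.length by
    obtain ⟨q, hqC, hq⟩ := this
    exact ⟨q.bypass, q.bypass_isPath, List.Subset.trans q.support_bypass_subset_support hqC,
      (Nat.mul_le_mul_left 2 q.length_bypass_le_length).trans hq⟩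
  set D := C.rotate x hx
  have hDC : D.support ⊆ C.support := fun z hz => (mem_support_rotate_iff C x hx).mp hz
  have hyD : y ∈ D.support := (mem_support_rotate_iff C x hx).mpr hy
  have hsplit : (D.takeUntil y hyD).length + (D.dropUntil y hyD).length = C.length := by
    rw [← length_append, take_spec, length_rotate]
  by_cases hshort : 2 * (D.takeUntil y hyD).length ≤ C.length
  · exact ⟨D.takeUntil y hyD,
      List.Subset.trans (D.support_takeUntil_subset_support hyD) hDC, hshort⟩
  · refine ⟨(D.dropUntil y hyD).reverse, ?_, ?_⟩
    · rw [support_reverse]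
      exact fun z hz => hDC (D.support_dropUntil_subset_support hyD (List.mem_reverse.mp hz))
    · rw [length_reverse]
      omega

lemma IsPath.isCycle_cons_concat {a b u : V} {q : G.Walk b a} (hq : q.IsPath)
    (hu : u ∉ q.support) (hab : a ≠ b) (hub : G.Adj u b) (hau : G.Adj a u) :
    (cons hub (q.concat hau)).IsCycle := by
  rw [cons_isCycle_iff, edges_concat, List.concat_eq_append, List.mem_append,
    List.mem_singleton, Sym2.eq_iff]
  refine ⟨hq.concat hu hau, ?_⟩
  rintro (hmem | ⟨rfl, -⟩ | ⟨-, rfl⟩)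
  · exact hu (fst_mem_support_of_mem_edges q hmem)
  · exact hu q.end_mem_support
  · exact hab rfl

section ShortestCycle

variable {c : V} {C : G.Walk c c}

lemma eq_of_adj_of_adj_of_length_eq_girth (hgirth : C.length = G.girth)
    (h5 : 5 ≤ C.length) {u a b : V} (hu : u ∉ C.support) (ha : a ∈ C.support)
    (hb : b ∈ C.support) (hua : G.Adj u a) (hub : G.Adj u b) : a = b := by
  by_contra hab
  obtain ⟨p, hp, hpC, hplen⟩ := exists_isPath_support_subset_two_mul_length_le C hb ha
  have hcycle := hp.isCycle_cons_concat (fun h => hu (hpC h)) hab hub hua.symm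
  have := hgirth ▸ G.girth_le_length hcycle
  simp only [length_cons, length_concat] at this
  omega

lemma not_adj_of_adj_of_length_eq_girth (hgirth : C.length = G.girth)
    (h7 : 7 ≤ C.length) {u v a b : V} (hu : u ∉ C.support) (hv : v ∉ C.support)
    (huv : G.Adj u v) (ha : a ∈ C.support) (hb : b ∈ C.support) (hua : G.Adj u a) :
    ¬ G.Adj v b := by
  intro hvb
  obtain ⟨p, hp, hpC, hplen⟩ := exists_isPath_support_subset_two_mul_length_le C hb ha
  have hvp : (cons hvb p).IsPath := hp.cons fun h => hv (hpC h)
  have hup : u ∉ (cons hvb p).support := by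
    rw [support_cons, List.mem_cons, not_or]
    exact ⟨huv.ne, fun h => hu (hpC h)⟩
  have hav : a ≠ v := fun h => hv (h ▸ ha)
  have hcycle := hvp.isCycle_cons_concat hup hav huv hua.symm
  have := hgirth ▸ G.girth_le_length hcycle
  simp only [length_cons, length_concat] at this
  omega

lemma card_filter_adj_le_one_of_length_eq_girth (hgirth : C.length = G.girth)
    (h5 : 5 ≤ C.length) {u : V} (hu : u ∉ C.support) :
    (C.support.toFinset.filter fun w => G.Adj u w).card ≤ 1 := by
  refine card_le_one.mpr fun a ha b hb => ?_
  rw [mem_filter, List.mem_toFinset] at ha hb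
  exact eq_of_adj_of_adj_of_length_eq_girth hgirth h5 hu ha.1 hb.1 ha.2 hb.2

end ShortestCycle

end SimpleGraph.Walk

open SimpleGraph.Walk

theorem stmt3_general {V : Type*} (G : SimpleGraph V) (c : V) (C : G.Walk c c)
    (hlen : (C.length : ℕ∞) = G.girth) (h7 : 7 ≤ C.length)
    (u v : V) (hu : u ∉ C.support) (hv : v ∉ C.support) (huv : G.Adj u v) :
    (C.support.toFinset.filter fun w => G.Adj u w).card +
      (C.support.toFinset.filter fun w => G.Adj v w).card ≤ 1 := by
  have hgirth : C.length = G.girth := by exact_mod_cast hlen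
  rcases (C.support.toFinset.filter fun w => G.Adj u w).eq_empty_or_nonempty with
    hnone | ⟨a, ha⟩
  · rw [hnone, card_empty, zero_add]
    exact card_filter_adj_le_one_of_length_eq_girth hgirth (by omega) hv
  · rw [mem_filter, List.mem_toFinset] at ha
    have hvnone : (C.support.toFinset.filter fun w => G.Adj v w) = ∅ :=
      filter_eq_empty_iff.mpr fun b hb =>
        not_adj_of_adj_of_length_eq_girth hgirth h7 hu hv huv ha.1 (List.mem_toFinset.mp hb) ha.2
    rw [hvnone, card_empty, add_zero]
    exact card_filter_adj_le_one_of_length_eq_girth hgirth (by omega) hu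

/-- If `C` is a cycle of a simple graph `G` whose length equals the girth of `G` and
`|C| ≥ 7`, then for any two adjacent vertices `u, v` outside `C`, the number of neighbors
of `u` on `C` plus the number of neighbors of `v` on `C` is at most `1`. -/
theorem stmt3 {V : Type*} [Fintype V] (G : SimpleGraph V) (c : V) (C : G.Walk c c)
    (hC : C.IsCycle) (hlen : (C.length : ℕ∞) = G.girth) (h7 : 7 ≤ C.length)
    (u v : V) (hu : u ∉ C.support) (hv : v ∉ C.support) (huv : G.Adj u v) :
    (C.support.toFinset.filter fun w => G.Adj u w).card +
      (C.support.toFinset.filter fun w => G.Adj v w).card ≤ 1 :=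
  stmt3_general G c C hlen h7 u v hu hv huv
end

section
/- Let C be a cycle in a simple graph G whose length equals the girth of G, with |C| ≥ 8. Then for every path v₁v₂v₃v₄v₅ in G - V(C), the sum over i of |N_C(v_i)| is at most 2. -/
open Classical Finset

/-! For incidences `(i, x) ≠ (j, y)` (that is, `vs i` adjacent to `x ∈ C`, `vs j` adjacent to
`y ∈ C`), the path through the `vs k` from `vs i` to `vs j` and an arc of `C` from `y` to `x`
close a cycle of length `|i - j| + |arc| + 2 ≥ |C|`. If the sum exceeds `2`, there are three
distinct incidences `(i, x), (j, y), (k, z)`. If `x = y` the trivial arc gives `|C| ≤ 4 + 2`;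
otherwise `x, y, z` cut `C` into three arcs, and summing the three bounds gives
`3|C| ≤ |C| + 8 + 6`, as the pairwise distances of three indices in `Fin 5` sum to at most `8`. -/

namespace SimpleGraph

variable {V : Type*} {G : SimpleGraph V}

namespace Walk

lemma IsCycle.isPath_dropUntil [DecidableEq V] {u v : V} {c : G.Walk u u} (hc : c.IsCycle)
    (hv : v ∈ c.support) (huv : u ≠ v) : (c.dropUntil v hv).IsPath := by
  rw [← take_spec c hv] at hc
  exact hc.isPath_of_append_right (not_nil_of_ne huv)

lemma IsCycle.exists_arcs_start [DecidableEq V] {u v w : V} {c : G.Walk u u}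
    (hc : c.IsCycle) (hv : v ∈ c.support) (hw : w ∈ c.support) (huv : u ≠ v) :
    ∃ (A : G.Walk u v) (B : G.Walk v w) (E : G.Walk w u),
      A.IsPath ∧ B.IsPath ∧ E.IsPath ∧
      A.support ⊆ c.support ∧ B.support ⊆ c.support ∧ E.support ⊆ c.support ∧
      A.length + B.length + E.length = c.length := by
  set A := c.takeUntil v hv
  set B := c.dropUntil v hv
  have hA : A.IsPath := hc.isPath_takeUntil hv
  have hB : B.IsPath := hc.isPath_dropUntil hv huv
  have hAB : A.append B = c := take_spec c hv
  have hAc : A.support ⊆ c.support := c.support_takeUntil_subset_support hv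
  have hBc : B.support ⊆ c.support := c.support_dropUntil_subset_support hv
  have hlen : A.length + B.length = c.length := by rw [← hAB, length_append]
  have hwAB : w ∈ A.support ∨ w ∈ B.support := by
    rw [← mem_support_append_iff, hAB]; exact hw
  rcases hwAB with hwA | hwB
  · -- `c` visits `u, w, v` in this order
    refine ⟨B.reverse, (A.dropUntil w hwA).reverse, (A.takeUntil w hwA).reverse,
      hB.reverse, (hA.dropUntil hwA).reverse, (hA.takeUntil hwA).reverse, ?_, ?_, ?_, ?_⟩
    · simpa using hBc
    · simpa using List.Subset.trans (A.support_dropUntil_subset_support hwA) hAc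
    · simpa using List.Subset.trans (A.support_takeUntil_subset_support hwA) hAc
    · have := congrArg length (take_spec A hwA)
      simp only [length_append, length_reverse] at this ⊢
      omega
  · refine ⟨A, B.takeUntil w hwB, B.dropUntil w hwB, hA, hB.takeUntil hwB, hB.dropUntil hwB,
      hAc, List.Subset.trans (B.support_takeUntil_subset_support hwB) hBc,
      List.Subset.trans (B.support_dropUntil_subset_support hwB) hBc, ?_⟩
    have := congrArg length (take_spec B hwB)
    simp only [length_append] at this
    omega

lemma IsCycle.exists_arcs [DecidableEq V] {u x y z : V} {c : G.Walk u u} (hc : c.IsCycle)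
    (hx : x ∈ c.support) (hy : y ∈ c.support) (hz : z ∈ c.support) (hxy : x ≠ y) :
    ∃ (A : G.Walk x y) (B : G.Walk y z) (E : G.Walk z x),
      A.IsPath ∧ B.IsPath ∧ E.IsPath ∧
      A.support ⊆ c.support ∧ B.support ⊆ c.support ∧ E.support ⊆ c.support ∧
      A.length + B.length + E.length = c.length := by
  have hmem (t : V) : t ∈ (c.rotate x hx).support ↔ t ∈ c.support := mem_support_rotate_iff ..
  obtain ⟨A, B, E, hA, hB, hE, hAc, hBc, hEc, hlen⟩ := (hc.rotate hx).exists_arcs_start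
    ((hmem y).2 hy) ((hmem z).2 hz) hxy
  exact ⟨A, B, E, hA, hB, hE, fun t ht => (hmem t).1 (hAc ht), fun t ht => (hmem t).1 (hBc ht),
    fun t ht => (hmem t).1 (hEc ht), by rwa [length_rotate] at hlen⟩

end Walk

open Walk in
lemma girth_le_length_add_length_add_two {u w x y : V} {P : G.Walk u w} {A : G.Walk y x}
    (hP : P.IsPath) (hA : A.IsPath) (hPA : P.support.Disjoint A.support)
    (hux : G.Adj u x) (hwy : G.Adj w y) (hne : u ≠ w ∨ x ≠ y) :
    G.girth ≤ P.length + A.length + 2 := by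
  have hsupp : (P.append (cons hwy A)).support = P.support ++ A.support := by
    rw [support_append, support_cons, List.tail_cons]
  have hpath : (P.append (cons hwy A)).IsPath := by
    rw [isPath_def, hsupp]
    exact hP.support_nodup.append hA.support_nodup hPA
  have hedge : s(x, u) ∉ (P.append (cons hwy A)).edges := by
    rw [edges_append, edges_cons, List.mem_append, List.mem_cons, Sym2.eq_iff]
    rintro (h | (⟨rfl, rfl⟩ | ⟨rfl, rfl⟩) | h)
    · exact hPA (P.fst_mem_support_of_mem_edges h) A.end_mem_support
    · exact hPA P.end_mem_support A.end_mem_support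
    · exact hne.elim (· rfl) (· rfl)
    · exact hPA P.start_mem_support (A.snd_mem_support_of_mem_edges h)
  have := girth_le_length ((cons_isCycle_iff _ hux.symm).2 ⟨hpath, hedge⟩)
  simp only [length_cons, length_append] at this
  omega

open Walk in
lemma exists_isPath_of_adj_succ_of_le {n : ℕ} {vs : Fin (n + 1) → V}
    (hinj : Function.Injective vs) (hpath : ∀ i : Fin n, G.Adj (vs i.castSucc) (vs i.succ))
    (i j : Fin (n + 1)) (hij : i ≤ j) :
    ∃ P : G.Walk (vs i) (vs j), P.IsPath ∧ P.length = j - i ∧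
      ∀ t ∈ P.support, ∃ k ≤ j, vs k = t := by
  induction j using Fin.induction with
  | zero =>
    obtain rfl : i = 0 := Fin.le_zero_iff.1 hij
    exact ⟨nil, .nil, rfl, by simp⟩
  | succ j ih =>
    rcases hij.lt_or_eq with hij | rfl
    · obtain ⟨P, hP, hlen, hsupp⟩ := ih (Fin.le_castSucc_iff.2 hij)
      have hnew : vs j.succ ∉ P.support := fun h => by
        obtain ⟨k, hk, hkj⟩ := hsupp _ h
        exact (Fin.castSucc_lt_succ (i := j)).not_ge (hinj hkj ▸ hk)
      refine ⟨P.concat (hpath j), hP.concat hnew _, ?_, ?_⟩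
      · have := Fin.lt_def.1 hij
        simp only [length_concat, hlen, Fin.val_succ, Fin.val_castSucc] at this ⊢
        omega
      · intro t ht
        rw [support_concat, List.mem_append, List.mem_singleton] at ht
        rcases ht with ht | rfl
        · obtain ⟨k, hk, rfl⟩ := hsupp t ht
          exact ⟨k, hk.trans (Fin.castSucc_le_succ j), rfl⟩
        · exact ⟨j.succ, le_rfl, rfl⟩
    · exact ⟨nil, .nil, by simp, fun t ht => ⟨j.succ, le_rfl, by simp_all⟩⟩

lemma exists_isPath_of_adj_succ {n : ℕ} {vs : Fin (n + 1) → V}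
    (hinj : Function.Injective vs) (hpath : ∀ i : Fin n, G.Adj (vs i.castSucc) (vs i.succ))
    (i j : Fin (n + 1)) :
    ∃ P : G.Walk (vs i) (vs j), P.IsPath ∧ P.length = Nat.dist i j ∧
      ∀ t ∈ P.support, t ∈ Set.range vs := by
  rcases le_total i j with hij | hji
  · obtain ⟨P, hP, hlen, hsupp⟩ := exists_isPath_of_adj_succ_of_le hinj hpath i j hij
    refine ⟨P, hP, ?_, fun t ht => ?_⟩
    · rw [hlen, Nat.dist_eq_sub_of_le hij]
    · obtain ⟨k, -, hk⟩ := hsupp t ht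
      exact ⟨k, hk⟩
  · obtain ⟨P, hP, hlen, hsupp⟩ := exists_isPath_of_adj_succ_of_le hinj hpath j i hji
    refine ⟨P.reverse, hP.reverse, ?_, fun t ht => ?_⟩
    · rw [Walk.length_reverse, hlen, Nat.dist_comm, Nat.dist_eq_sub_of_le hji]
    · obtain ⟨k, -, hk⟩ := hsupp t (by simpa using ht)
      exact ⟨k, hk⟩

lemma girth_le_dist_add_length_add_two {n : ℕ} {vs : Fin (n + 1) → V}
    (hinj : Function.Injective vs) (hpath : ∀ i : Fin n, G.Adj (vs i.castSucc) (vs i.succ))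
    {S : Set V} (hout : ∀ k, vs k ∉ S) {i j : Fin (n + 1)} {x y : V}
    (hix : G.Adj (vs i) x) (hjy : G.Adj (vs j) y) (hne : i ≠ j ∨ x ≠ y)
    {A : G.Walk y x} (hA : A.IsPath) (hAS : ∀ t ∈ A.support, t ∈ S) :
    G.girth ≤ Nat.dist i j + A.length + 2 := by
  obtain ⟨P, hP, hlen, hPvs⟩ := exists_isPath_of_adj_succ hinj hpath i j
  have hPA : P.support.Disjoint A.support := fun t htP htA => by
    obtain ⟨k, rfl⟩ := hPvs t htP
    exact hout k (hAS _ htA)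
  rw [← hlen]
  exact girth_le_length_add_length_add_two hP hA hPA hix hjy (hne.imp_left hinj.ne)

end SimpleGraph

theorem stmt4_general {V : Type*} (G : SimpleGraph V) (c : V) (C : G.Walk c c)
    (hC : C.IsCycle) (hlen : (C.length : ℕ∞) = G.girth) (h8 : 8 ≤ C.length)
    (vs : Fin 5 → V) (hinj : Function.Injective vs)
    (hpath : ∀ i : Fin 4, G.Adj (vs i.castSucc) (vs i.succ))
    (hout : ∀ i, vs i ∉ C.support) :
    ∑ i : Fin 5, (C.support.toFinset.filter fun w => G.Adj (vs i) w).card ≤ 2 := by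
  have hg : G.girth = C.length := by exact_mod_cast hlen.symm
  by_contra! hsum
  rw [← card_sigma, two_lt_card_iff] at hsum
  obtain ⟨⟨i, x⟩, ⟨j, y⟩, ⟨k, z⟩, hix, hjy, hkz, hij, hik, hjk⟩ := hsum
  simp only [mem_sigma, mem_univ, mem_filter, List.mem_toFinset, true_and] at hix hjy hkz
  have key {i j : Fin 5} {x y : V} (hix : G.Adj (vs i) x) (hjy : G.Adj (vs j) y)
      (hne : (⟨i, x⟩ : (_ : Fin 5) × V) ≠ ⟨j, y⟩) {A : G.Walk y x} (hA : A.IsPath)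
      (hAC : A.support ⊆ C.support) : C.length ≤ Nat.dist i j + A.length + 2 :=
    hg ▸ SimpleGraph.girth_le_dist_add_length_add_two (S := {t | t ∈ C.support}) hinj hpath hout
      hix hjy (by contrapose! hne; rw [hne.1, hne.2]) hA hAC
  have hi := i.isLt; have hj := j.isLt; have hk := k.isLt
  by_cases hxy : x = y
  · subst hxy
    have := key hix.2 hjy.2 hij .nil (by simpa using hix.1)
    simp only [Nat.dist, SimpleGraph.Walk.length_nil] at this
    omega
  obtain ⟨A, B, E, hA, hB, hE, hAC, hBC, hEC, hABE⟩ := hC.exists_arcs hix.1 hjy.1 hkz.1 hxy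
  have hA' := key hjy.2 hix.2 hij.symm hA hAC
  have hB' := key hkz.2 hjy.2 hjk.symm hB hBC
  have hE' := key hix.2 hkz.2 hik hE hEC
  simp only [Nat.dist] at hA' hB' hE'
  omega

/-- If `C` is a cycle of a simple graph `G` whose length equals the girth of `G` and
`|C| ≥ 8`, then for every path `v₁v₂v₃v₄v₅` in `G - V(C)`, the total number of neighbors
of the `vᵢ` on `C` is at most `2`. -/
theorem stmt4 {V : Type*} [Fintype V] (G : SimpleGraph V) (c : V) (C : G.Walk c c)
    (hC : C.IsCycle) (hlen : (C.length : ℕ∞) = G.girth) (h8 : 8 ≤ C.length)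
    (vs : Fin 5 → V) (hinj : Function.Injective vs)
    (hpath : ∀ i : Fin 4, G.Adj (vs i.castSucc) (vs i.succ))
    (hout : ∀ i, vs i ∉ C.support) :
    ∑ i : Fin 5, (C.support.toFinset.filter fun w => G.Adj (vs i) w).card ≤ 2 :=
  stmt4_general G c C hC hlen h8 vs hinj hpath hout
end

section
/- Let G be a critical multigraph on n vertices with χ'(G) ≥ Δ(G) + 2, and assume the Goldberg–Seymour theorem (χ' = Γ when χ' ≥ Δ+2). Then n is odd and for every vertex v, d_G(v) = Σ_{w ≠ v} (χ'(G) - 1 - d_G(w)) + 2; in particular δ(G) ≥ (n-1)(χ'(G) - 1 - Δ(G)) + 2. -/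
/-!
The odd pair `(S, F)` realising `Γ(G) = χ'(G)` must be all of `G`: each colour class of a proper
colouring of `F` is a matching inside the odd set `S`, so `2|F| ≤ χ'(F)(|S| - 1)`, and criticality
would give `χ'(F) < χ'(G)` for a proper subgraph. Hence `n` is odd and `χ' = ⌈2m/(n-1)⌉`, i.e.
`(χ' - 1)(n - 1) < 2m`, while deleting one edge gives `2(m - 1) ≤ (χ' - 1)(n - 1)`. As `n - 1` is
even this pins down `2m = (χ' - 1)(n - 1) + 2`, and the degree formula is the handshake lemma.
-/

open Classical Finset

/-- The degree of a vertex in a multigraph. -/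
noncomputable def mdeg {V E : Type*} [Fintype E] (ends : E → Sym2 V) (v : V) : ℕ :=
  (univ.filter fun e => v ∈ ends e).card

/-- The maximum degree of a multigraph. -/
noncomputable def mmaxDeg {V E : Type*} [Fintype V] [Fintype E] (ends : E → Sym2 V) : ℕ :=
  univ.sup (mdeg ends)

/-- The chromatic index of the subgraph of a multigraph on an edge set `F`:
the least `k` such that the edges in `F` can be properly colored with `k` colors. -/
noncomputable def chromIndexOn {V E : Type*} (ends : E → Sym2 V) (F : Finset E) : ℕ :=
  sInf {k | ∃ f : {e : E // e ∈ F} → Fin k,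
    ∀ e₁ e₂, e₁ ≠ e₂ → (∃ v, v ∈ ends e₁.1 ∧ v ∈ ends e₂.1) → f e₁ ≠ f e₂}

/-- The density `Γ(G)` of a multigraph. -/
noncomputable def density {V E : Type*} [Fintype V] [Fintype E] (ends : E → Sym2 V) : ℕ :=
  sSup {k : ℕ | ∃ (S : Finset V) (F : Finset E), Odd S.card ∧
    (∀ e ∈ F, ∀ v ∈ ends e, v ∈ S) ∧
    (k : ℤ) = ⌈(2 * F.card : ℚ) / ((S.card : ℚ) - 1)⌉}

theorem filter_mem_eq_toFinset {V : Type*} {z : Sym2 V} {S : Finset V} (hz : ∀ v ∈ z, v ∈ S) :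
    S.filter (· ∈ z) = z.toFinset := by
  ext v
  simpa using hz v

theorem sum_mdeg_eq_two_mul_card {V E : Type*} [Fintype V] [Fintype E] (ends : E → Sym2 V)
    (hl : ∀ e, ¬ (ends e).IsDiag) :
    ∑ v, mdeg ends v = 2 * Fintype.card E :=
  calc ∑ v, mdeg ends v = ∑ e : E, #(univ.filter (· ∈ ends e)) :=
        sum_card_bipartiteAbove_eq_sum_card_bipartiteBelow (fun v e => v ∈ ends e)
    _ = ∑ _e : E, 2 := by
        refine sum_congr rfl fun e _ => ?_
        rw [filter_mem_eq_toFinset (by simp), Sym2.card_toFinset_of_not_isDiag _ (hl e)]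
    _ = 2 * Fintype.card E := by simp [mul_comm]

theorem two_mul_card_le_of_matching {V E : Type*} (ends : E → Sym2 V)
    (hl : ∀ e, ¬ (ends e).IsDiag) {S : Finset V} {M : Finset E}
    (hMS : ∀ e ∈ M, ∀ v ∈ ends e, v ∈ S)
    (hM : ∀ e₁ ∈ M, ∀ e₂ ∈ M, ∀ v, v ∈ ends e₁ → v ∈ ends e₂ → e₁ = e₂) :
    2 * #M ≤ #S := by
  rw [mul_comm, ← mul_one #S]
  refine card_mul_le_card_mul (fun e v => v ∈ ends e) (fun e he => ?_) (fun v _ => ?_)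
  · rw [bipartiteAbove, filter_mem_eq_toFinset (hMS e he),
      Sym2.card_toFinset_of_not_isDiag _ (hl e)]
  · exact card_le_one.mpr fun e₁ h₁ e₂ h₂ => by
      rw [bipartiteBelow, mem_filter] at h₁ h₂
      exact hM e₁ h₁.1 e₂ h₂.1 v h₁.2 h₂.2

def IsProperEdgeColoring {V E : Type*} (ends : E → Sym2 V) {F : Finset E} {k : ℕ}
    (f : {e : E // e ∈ F} → Fin k) : Prop :=
  ∀ e₁ e₂, e₁ ≠ e₂ → (∃ v, v ∈ ends e₁.1 ∧ v ∈ ends e₂.1) → f e₁ ≠ f e₂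

theorem exists_isProperEdgeColoring_chromIndexOn {V E : Type*} (ends : E → Sym2 V)
    (F : Finset E) :
    ∃ f : {e : E // e ∈ F} → Fin (chromIndexOn ends F), IsProperEdgeColoring ends f :=
  Nat.sInf_mem (s := {k | ∃ f : {e : E // e ∈ F} → Fin k, IsProperEdgeColoring ends f})
    ⟨#F, Fintype.equivFinOfCardEq (Fintype.card_coe F), fun _ _ hne _ => (Equiv.injective _).ne hne⟩

theorem chromIndexOn_le {V E : Type*} {ends : E → Sym2 V} {F : Finset E} {k : ℕ}
    {f : {e : E // e ∈ F} → Fin k} (hf : IsProperEdgeColoring ends f) :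
    chromIndexOn ends F ≤ k :=
  Nat.sInf_le ⟨f, hf⟩

theorem chromIndexOn_mono {V E : Type*} (ends : E → Sym2 V) {F F' : Finset E} (h : F ⊆ F') :
    chromIndexOn ends F ≤ chromIndexOn ends F' := by
  obtain ⟨f, hf⟩ := exists_isProperEdgeColoring_chromIndexOn ends F'
  refine chromIndexOn_le (f := fun e => f ⟨e.1, h e.2⟩) fun e₁ e₂ hne hv => hf _ _ ?_ hv
  exact fun heq => hne (Subtype.ext (Subtype.mk.inj heq))

theorem two_mul_card_le_mul_of_coloring {V E : Type*} (ends : E → Sym2 V)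
    (hl : ∀ e, ¬ (ends e).IsDiag) {S : Finset V} {F : Finset E}
    (hSF : ∀ e ∈ F, ∀ v ∈ ends e, v ∈ S) (hodd : Odd #S) {k : ℕ}
    {f : {e : E // e ∈ F} → Fin k} (hf : IsProperEdgeColoring ends f) :
    2 * #F ≤ k * (#S - 1) := by
  have hclass : ∀ c, 2 * #(univ.filter (f · = c)) ≤ #S - 1 := by
    intro c
    have := two_mul_card_le_of_matching (fun e : {e : E // e ∈ F} => ends e.1) (fun e => hl e)
      (fun e _ v hv => hSF e.1 e.2 v hv) (M := univ.filter (f · = c))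
      (fun e₁ h₁ e₂ h₂ v hv₁ hv₂ => by
        by_contra hne
        exact hf e₁ e₂ hne ⟨v, hv₁, hv₂⟩ ((mem_filter.mp h₁).2.trans (mem_filter.mp h₂).2.symm))
    obtain ⟨t, ht⟩ := hodd
    omega
  calc 2 * #F = ∑ c, 2 * #(univ.filter (f · = c)) := by
        rw [← mul_sum, ← card_eq_sum_card_fiberwise (fun e _ => mem_univ (f e)), card_univ,
          Fintype.card_coe]
    _ ≤ ∑ _c : Fin k, (#S - 1) := sum_le_sum fun c _ => hclass c
    _ = k * (#S - 1) := by simp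

theorem two_mul_card_le_chromIndexOn_mul {V E : Type*} (ends : E → Sym2 V)
    (hl : ∀ e, ¬ (ends e).IsDiag) {S : Finset V} {F : Finset E}
    (hSF : ∀ e ∈ F, ∀ v ∈ ends e, v ∈ S) (hodd : Odd #S) :
    2 * (#F : ℤ) ≤ chromIndexOn ends F * ((#S : ℤ) - 1) := by
  obtain ⟨f, hf⟩ := exists_isProperEdgeColoring_chromIndexOn ends F
  have := two_mul_card_le_mul_of_coloring ends hl hSF hodd hf
  rw [← Nat.cast_one, ← Nat.cast_sub hodd.pos]
  exact_mod_cast this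

theorem ceil_le_chromIndexOn {V E : Type*} (ends : E → Sym2 V)
    (hl : ∀ e, ¬ (ends e).IsDiag) {S : Finset V} {F : Finset E}
    (hSF : ∀ e ∈ F, ∀ v ∈ ends e, v ∈ S) (hodd : Odd #S) :
    ⌈(2 * #F : ℚ) / ((#S : ℚ) - 1)⌉ ≤ chromIndexOn ends F := by
  have := hodd.pos
  obtain hS | hS : #S = 1 ∨ 1 < #S := by omega
  · simp [hS] -- the quotient is `x / 0 = 0`
  rw [Int.ceil_le, div_le_iff₀ (by rw [sub_pos]; exact_mod_cast hS)]
  exact_mod_cast two_mul_card_le_chromIndexOn_mul ends hl hSF hodd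

theorem exists_density_eq_ceil {V E : Type*} [Fintype V] [Fintype E] (ends : E → Sym2 V)
    (hl : ∀ e, ¬ (ends e).IsDiag) (hpos : 0 < density ends) :
    ∃ (S : Finset V) (F : Finset E), Odd #S ∧ (∀ e ∈ F, ∀ v ∈ ends e, v ∈ S) ∧
      (density ends : ℤ) = ⌈(2 * #F : ℚ) / ((#S : ℚ) - 1)⌉ := by
  refine Nat.sSup_mem (s := {k : ℕ | ∃ (S : Finset V) (F : Finset E), Odd #S ∧
    (∀ e ∈ F, ∀ v ∈ ends e, v ∈ S) ∧ (k : ℤ) = ⌈(2 * #F : ℚ) / ((#S : ℚ) - 1)⌉})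
    ?_ ⟨chromIndexOn ends univ, ?_⟩
  · rw [Set.nonempty_iff_ne_empty]
    intro hempty
    rw [density, hempty, csSup_empty] at hpos
    exact lt_irrefl 0 hpos
  · rintro k ⟨S, F, hodd, hSF, hk⟩
    have := (ceil_le_chromIndexOn ends hl hSF hodd).trans
      (Nat.cast_le.mpr (chromIndexOn_mono ends (subset_univ F)))
    omega

theorem eq_univ_of_chromIndexOn_eq_ceil {V E : Type*} [Fintype V] [Fintype E]
    (ends : E → Sym2 V) (hl : ∀ e, ¬ (ends e).IsDiag)
    (hcrit : ∀ (S : Finset V) (F : Finset E), (∀ e ∈ F, ∀ v ∈ ends e, v ∈ S) →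
      (S ≠ univ ∨ F ≠ univ) →
      chromIndexOn ends F < chromIndexOn ends (univ : Finset E))
    {S : Finset V} {F : Finset E} (hSF : ∀ e ∈ F, ∀ v ∈ ends e, v ∈ S) (hodd : Odd #S)
    (hc : (chromIndexOn ends univ : ℤ) = ⌈(2 * #F : ℚ) / ((#S : ℚ) - 1)⌉) :
    S = univ ∧ F = univ := by
  by_contra hproper
  have hlt := hcrit S F hSF (not_and_or.mp hproper)
  have := ceil_le_chromIndexOn ends hl hSF hodd
  omega

theorem lt_two_mul_of_eq_ceil {c n m : ℕ} (hc0 : 0 < c)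
    (hc : (c : ℤ) = ⌈(2 * m : ℚ) / ((n : ℚ) - 1)⌉) :
    ((c : ℤ) - 1) * ((n : ℤ) - 1) < 2 * m := by
  have hn : 1 < n := by
    by_contra! hn
    have hdiv : (2 * m : ℚ) / ((n : ℚ) - 1) ≤ 0 :=
      div_nonpos_of_nonneg_of_nonpos (by positivity) (by rw [sub_nonpos]; exact_mod_cast hn)
    have : ⌈(2 * m : ℚ) / ((n : ℚ) - 1)⌉ ≤ 0 := Int.ceil_le.mpr (by exact_mod_cast hdiv)
    omega
  have := Int.lt_ceil.mp (show (c : ℤ) - 1 < ⌈(2 * m : ℚ) / ((n : ℚ) - 1)⌉ by omega)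
  rw [lt_div_iff₀ (by rw [sub_pos]; exact_mod_cast hn)] at this
  exact_mod_cast this

theorem two_mul_card_sub_one_le {V E : Type*} [Fintype V] [Fintype E] (ends : E → Sym2 V)
    (hl : ∀ e, ¬ (ends e).IsDiag) (hodd : Odd (Fintype.card V)) (e : E)
    (hlt : chromIndexOn ends (univ.erase e) < chromIndexOn ends univ) :
    2 * ((Fintype.card E : ℤ) - 1)
      ≤ ((chromIndexOn ends univ : ℤ) - 1) * ((Fintype.card V : ℤ) - 1) := by
  have hbound := two_mul_card_le_chromIndexOn_mul ends hl (S := univ) (F := univ.erase e)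
    (fun _ _ v _ => mem_univ v) (by rwa [card_univ])
  rw [card_erase_of_mem (mem_univ e), card_univ, card_univ,
    Nat.cast_sub (Fintype.card_pos_iff.mpr ⟨e⟩), Nat.cast_one] at hbound
  have hn : (0 : ℤ) ≤ (Fintype.card V : ℤ) - 1 := by
    have := hodd.pos
    omega
  calc 2 * ((Fintype.card E : ℤ) - 1)
      ≤ chromIndexOn ends (univ.erase e) * ((Fintype.card V : ℤ) - 1) := hbound
    _ ≤ ((chromIndexOn ends univ : ℤ) - 1) * ((Fintype.card V : ℤ) - 1) := by
      gcongr
      omega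

theorem eq_sum_erase_sub_add_two {V : Type*} [Fintype V] {d : V → ℤ} {k : ℤ}
    (h : ∑ w, d w = k * ((Fintype.card V : ℤ) - 1) + 2) (v : V) :
    d v = ∑ w ∈ univ.erase v, (k - d w) + 2 := by
  rw [sum_sub_distrib, sum_const, card_erase_of_mem (mem_univ v), card_univ, nsmul_eq_mul,
    Nat.cast_sub (Fintype.card_pos_iff.mpr ⟨v⟩), Nat.cast_one]
  linarith [add_sum_erase univ d (mem_univ v)]

theorem card_sub_one_mul_add_two_le {V : Type*} [Fintype V] {d : V → ℤ} {k D : ℤ}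
    (hD : ∀ w, d w ≤ D) {v : V} (hv : d v = ∑ w ∈ univ.erase v, (k - d w) + 2) :
    ((Fintype.card V : ℤ) - 1) * (k - D) + 2 ≤ d v := by
  have hsum := card_nsmul_le_sum (univ.erase v) (fun w => k - d w) (k - D)
    fun w _ => by linarith [hD w]
  rw [card_erase_of_mem (mem_univ v), card_univ, nsmul_eq_mul,
    Nat.cast_sub (Fintype.card_pos_iff.mpr ⟨v⟩), Nat.cast_one] at hsum
  linarith

/-- Let `G` be a critical multigraph on `n` vertices with `χ'(G) ≥ Δ(G) + 2` and assume
the Goldberg–Seymour theorem `χ'(G) = Γ(G)`. Then `n` is odd, and for every vertex `v`,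
`d_G(v) = Σ_{w ≠ v} (χ'(G) - 1 - d_G(w)) + 2`; in particular every vertex has degree at
least `(n-1)(χ'(G) - 1 - Δ(G)) + 2`. -/
theorem stmt10 {V E : Type*} [Fintype V] [Fintype E] (ends : E → Sym2 V)
    (hloopless : ∀ e, ¬ (ends e).IsDiag)
    (hcrit : ∀ (S : Finset V) (F : Finset E), (∀ e ∈ F, ∀ v ∈ ends e, v ∈ S) →
      (S ≠ univ ∨ F ≠ univ) →
      chromIndexOn ends F < chromIndexOn ends (univ : Finset E))
    (hchi : mmaxDeg ends + 2 ≤ chromIndexOn ends (univ : Finset E))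
    (hGS : chromIndexOn ends (univ : Finset E) = density ends) :
    Odd (Fintype.card V) ∧
      (∀ v : V, (mdeg ends v : ℤ)
        = (∑ w ∈ univ.erase v,
            ((chromIndexOn ends (univ : Finset E) : ℤ) - 1 - mdeg ends w)) + 2) ∧
      (∀ v : V, ((Fintype.card V : ℤ) - 1)
          * ((chromIndexOn ends (univ : Finset E) : ℤ) - 1 - mmaxDeg ends) + 2
        ≤ (mdeg ends v : ℤ)) := by
  obtain ⟨S, F, hodd, hSF, hceil⟩ := exists_density_eq_ceil ends hloopless (by omega)
  rw [← hGS] at hceil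
  obtain ⟨rfl, rfl⟩ := eq_univ_of_chromIndexOn_eq_ceil ends hloopless hcrit hSF hodd hceil
  rw [card_univ] at hodd
  rw [card_univ, card_univ] at hceil
  have hlow := lt_two_mul_of_eq_ceil (by omega) hceil
  obtain ⟨e⟩ : Nonempty E := Fintype.card_pos_iff.mp (by have := hodd.pos; nlinarith)
  have hup := two_mul_card_sub_one_le ends hloopless hodd e
    (hcrit _ _ (fun _ _ v _ => mem_univ v) (Or.inr fun h => (erase_eq_self.mp h) (mem_univ e)))
  have hedges : ∑ v, (mdeg ends v : ℤ)
      = ((chromIndexOn ends univ : ℤ) - 1) * ((Fintype.card V : ℤ) - 1) + 2 := by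
    obtain ⟨t, ht⟩ : Even (((chromIndexOn ends univ : ℤ) - 1) * ((Fintype.card V : ℤ) - 1)) :=
      (Int.even_sub_one.mpr (Int.not_even_iff_odd.mpr hodd.natCast)).mul_left _
    push_cast [← Nat.cast_sum, sum_mdeg_eq_two_mul_card ends hloopless]
    omega
  have hdeg := eq_sum_erase_sub_add_two hedges
  exact ⟨hodd, hdeg, fun v => card_sub_one_mul_add_two_le
    (fun w => Nat.cast_le.mpr (le_sup (mem_univ w))) (hdeg v)⟩
end

section
/- Let G be a simple graph with girth at least 5 on 11 vertices that is the edge-disjoint union (as a vertex partition) of a 5-cycle C₁ = x₁x₂x₃x₄x₅ and a 6-cycle C₂ = y₁...y₆ together with edges between them, such that C₁ is a shortest cycle. Then some vertex of C₂ has no neighbor on C₁; in particular δ(G) ≤ 2 fails to reach 3, i.e., G has a vertex of degree at most 2. -/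
open Classical Finset

/-! If every vertex `y j` of the hexagon had a neighbour `x (f j)` on the pentagon, girth `≥ 5`
would force `f (j + 1) - f j ∈ {2, 3}` (a difference `0` or `±1` closes a triangle or a 4-cycle)
and `f (j + 2) ≠ f j` (a 4-cycle through `y j, y (j + 1), y (j + 2)`). So `f` would be a closed
non-backtracking walk of length 6 in the pentagram `i ~ i ± 2` on `Fin 5`, which is again a
5-cycle: its step is constant, and telescoping gives `6 • s = 0` with `s = ±2`, impossible.
A hexagon vertex without neighbour on the pentagon has degree at most 2, since girth `≥ 5` leaves the
hexagon chordless. -/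

namespace Fin

lemma apply_eq_apply_zero_of_apply_add_one {n : ℕ} {α : Type*} {s : Fin (n + 1) → α}
    (hs : ∀ j, s (j + 1) = s j) (j : Fin (n + 1)) : s j = s 0 :=
  Fin.induction rfl (fun i ih => by rw [← Fin.coeSucc_eq_succ, hs, ih]) j

lemma sum_apply_add_one_sub {n : ℕ} [NeZero n] {M : Type*} [AddCommGroup M] (f : Fin n → M) :
    ∑ j, (f (j + 1) - f j) = 0 := by
  rw [sum_sub_distrib, sub_eq_zero]
  exact Equiv.sum_comp (Equiv.addRight 1) f

end Fin

lemma false_of_closed_pentagram_walk_of_length_six (f : Fin 6 → Fin 5)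
    (hfar : ∀ j, f (j + 1) ≠ f j ∧ f (j + 1) ≠ f j + 1 ∧ f j ≠ f (j + 1) + 1)
    (hskip : ∀ j, f (j + 2) ≠ f j) : False := by
  set s : Fin 6 → Fin 5 := fun j => f (j + 1) - f j with hs_def
  have hstep : ∀ j, s j = 2 ∨ s j = 3 := fun j =>
    (by decide : ∀ a b : Fin 5, b ≠ a ∧ b ≠ a + 1 ∧ a ≠ b + 1 → b - a = 2 ∨ b - a = 3) _ _ (hfar j)
  have hconst : ∀ j, s (j + 1) = s j := by
    intro j
    have hsum : s j + s (j + 1) ≠ 0 := by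
      have : s j + s (j + 1) = f (j + 2) - f j := by
        simp only [hs_def, add_assoc, Fin.reduceAdd]; abel
      rw [this, sub_ne_zero]; exact hskip j
    exact (by decide : ∀ a b : Fin 5, (a = 2 ∨ a = 3) → (b = 2 ∨ b = 3) → a + b ≠ 0 → b = a)
      _ _ (hstep j) (hstep (j + 1)) hsum
  have htotal : ∑ j, s j = 0 := Fin.sum_apply_add_one_sub f
  rw [Finset.sum_congr rfl fun j _ => Fin.apply_eq_apply_zero_of_apply_add_one hconst j,
    sum_const, card_univ, Fintype.card_fin] at htotal
  exact (by decide : ∀ a : Fin 5, (a = 2 ∨ a = 3) → 6 • a ≠ 0) _ (hstep 0) htotal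

namespace SimpleGraph

variable {V : Type*} {G : SimpleGraph V} {a b c d : V}

lemma Adj.not_adj_of_three_lt_girth (hg : 3 < G.girth) (hab : G.Adj a b) (hbc : G.Adj b c) :
    ¬G.Adj c a := fun hca => by
  have hcyc : (Walk.cons hab (.cons hbc (.cons hca .nil))).IsCycle := by
    simp [Walk.isCycle_def, Walk.isTrail_def, hab.ne, hbc.ne, hca.ne, hab.ne', hca.ne']
  have := G.girth_le_length hcyc
  simp only [Walk.length_cons, Walk.length_nil] at this
  omega

lemma Adj.not_adj_of_four_lt_girth (hg : 4 < G.girth) (hac : a ≠ c) (hbd : b ≠ d)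
    (hab : G.Adj a b) (hbc : G.Adj b c) (hcd : G.Adj c d) : ¬G.Adj d a := fun hda => by
  have hcyc : (Walk.cons hab (.cons hbc (.cons hcd (.cons hda .nil)))).IsCycle := by
    simp [Walk.isCycle_def, Walk.isTrail_def, hab.ne, hbc.ne, hcd.ne, hda.ne, hab.ne', hda.ne',
      hac, hbd, hac.symm]
  have := G.girth_le_length hcyc
  simp only [Walk.length_cons, Walk.length_nil] at this
  omega

variable {n : ℕ} [NeZero n] {x : Fin n → V} {u v : V} {i k : Fin n}

lemma Adj.cycle_indices_ne_of_four_lt_girth (hg : 4 < G.girth)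
    (hx : ∀ i, G.Adj (x i) (x (i + 1))) (hux : ∀ i, u ≠ x i) (hvx : ∀ i, v ≠ x i)
    (huv : G.Adj u v) (hu : G.Adj u (x i)) (hv : G.Adj v (x k)) :
    k ≠ i ∧ k ≠ i + 1 ∧ i ≠ k + 1 := by
  refine ⟨?_, ?_, ?_⟩ <;> rintro rfl
  · exact huv.not_adj_of_three_lt_girth (by omega) hv hu.symm
  · exact hu.not_adj_of_four_lt_girth hg (hux _) (hvx _).symm (hx i) hv.symm huv.symm
  · exact hv.not_adj_of_four_lt_girth hg (hvx _) (hux _).symm (hx k) hu.symm huv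

lemma eq_add_one_or_eq_sub_one_of_adj_hexagon {y : Fin 6 → V} (hg : 4 < G.girth)
    (hyinj : Function.Injective y) (hy : ∀ j, G.Adj (y j) (y (j + 1))) {j k : Fin 6}
    (h : G.Adj (y j) (y k)) : k = j + 1 ∨ k = j - 1 := by
  set z : Fin 6 → V := fun d => y (j + d)
  have hz : ∀ d, G.Adj (z d) (z (d + 1)) := fun d => by simpa only [z, add_assoc] using hy (j + d)
  have hzinj : Function.Injective z := hyinj.comp (add_right_injective j)
  obtain ⟨d, rfl⟩ : ∃ d, k = j + d := ⟨k - j, (add_sub_cancel _ _).symm⟩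
  replace h : G.Adj (z 0) (z d) := by simpa only [z, add_zero] using h
  rcases (by decide : ∀ d : Fin 6, d = 0 ∨ d = 1 ∨ d = 2 ∨ d = 3 ∨ d = 4 ∨ d = 5) d with
    rfl | rfl | rfl | rfl | rfl | rfl
  · exact (h.ne rfl).elim
  · exact .inl rfl
  · exact absurd h.symm ((hz 0).not_adj_of_three_lt_girth (by omega) (hz 1))
  · exact absurd h.symm ((hz 0).not_adj_of_four_lt_girth hg (hzinj.ne (by decide))
      (hzinj.ne (by decide)) (hz 1) (hz 2))
  · exact absurd h ((hz 4).not_adj_of_three_lt_girth (by omega) (hz 5))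
  · exact .inr (by rw [sub_eq_add_neg]; rfl)

end SimpleGraph

open SimpleGraph

theorem stmt13_general {V : Type*} [Fintype V] (G : SimpleGraph V) [DecidableRel G.Adj]
    (hgirth : 5 ≤ G.girth)
    (x : Fin 5 → V) (y : Fin 6 → V)
    (hyinj : Function.Injective y)
    (hxy : ∀ i j, x i ≠ y j)
    (hcover : ∀ v : V, (∃ i, v = x i) ∨ (∃ j, v = y j))
    (hC1 : ∀ i : Fin 5, G.Adj (x i) (x (i + 1)))
    (hC2 : ∀ j : Fin 6, G.Adj (y j) (y (j + 1))) :
    (∃ j : Fin 6, ∀ i : Fin 5, ¬ G.Adj (y j) (x i)) ∧ (∃ v : V, G.degree v ≤ 2) := by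
  have hg : 4 < G.girth := hgirth
  obtain ⟨j, hj⟩ : ∃ j : Fin 6, ∀ i : Fin 5, ¬ G.Adj (y j) (x i) := by
    by_contra! h
    choose f hf using h
    refine false_of_closed_pentagram_walk_of_length_six f (fun j => ?_) (fun j hskip => ?_)
    · exact (hC2 j).cycle_indices_ne_of_four_lt_girth hg hC1 (fun i => (hxy i j).symm)
        (fun i => (hxy i (j + 1)).symm) (hf j) (hf (j + 1))
    · have hC2' : G.Adj (y (j + 1)) (y (j + 2)) := by simpa only [add_assoc, Fin.reduceAdd] using hC2 (j + 1)
      exact (hC2 j).not_adj_of_four_lt_girth hg (hyinj.ne (by simp)) (hxy _ _).symm hC2'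
        (hskip ▸ hf (j + 2)) (hf j).symm
  refine ⟨⟨j, hj⟩, y j, ?_⟩
  have hsub : G.neighborFinset (y j) ⊆ {y (j + 1), y (j - 1)} := by
    intro v hv
    rw [mem_neighborFinset] at hv
    rcases hcover v with ⟨i, rfl⟩ | ⟨k, rfl⟩
    · exact absurd hv (hj i)
    · rcases eq_add_one_or_eq_sub_one_of_adj_hexagon hg hyinj hC2 hv with rfl | rfl <;> simp
  exact card_neighborFinset_eq_degree G (y j) ▸ (card_le_card hsub).trans card_le_two

/-- Let `G` be a simple graph with girth at least `5` on `11` vertices whose vertex set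
is partitioned into a `5`-cycle `C₁ = x₁…x₅` and a `6`-cycle `C₂ = y₁…y₆` (with
arbitrary further edges between them). Then some vertex of `C₂` has no neighbor on
`C₁`; in particular `G` has a vertex of degree at most `2`. -/
theorem stmt13 {V : Type*} [Fintype V] (G : SimpleGraph V) [DecidableRel G.Adj]
    (hcard : Fintype.card V = 11) (hgirth : 5 ≤ G.girth)
    (x : Fin 5 → V) (y : Fin 6 → V)
    (hxinj : Function.Injective x) (hyinj : Function.Injective y)
    (hxy : ∀ i j, x i ≠ y j)
    (hcover : ∀ v : V, (∃ i, v = x i) ∨ (∃ j, v = y j))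
    (hC1 : ∀ i : Fin 5, G.Adj (x i) (x (i + 1)))
    (hC2 : ∀ j : Fin 6, G.Adj (y j) (y (j + 1))) :
    (∃ j : Fin 6, ∀ i : Fin 5, ¬ G.Adj (y j) (x i)) ∧ (∃ v : V, G.degree v ≤ 2) :=
  stmt13_general G hgirth x y hyinj hxy hcover hC1 hC2
end

section
/- Let T be a tree which is the union of t ≥ 2 internally disjoint paths P₁,...,P_t from a common vertex v₀ to distinct vertices x₁,...,x_t on a cycle C, where all internal vertices of the paths avoid C, and suppose every cycle of the graph T ∪ C has length at least |C|. Then |V(T) \ V(C)| ≥ (t-1)|C|/2 - (t-1). -/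
/-!
Put `g (x i) = |P i|`. If `Q` is a path along `C` from `x i` to `x j` (`i ≠ j`), then `P i ++ Q`
and `P j` are distinct paths from `v₀` to `x j`, so their union contains a cycle of `T ∪ C` of
length at most `|P i| + |Q| + |P j|`; by the girth assumption `|C| ≤ g (x i) + g (x j) + |Q|`.
Summing this over the `t` arcs into which the `x i` cut `C` gives `t |C| ≤ 2 ∑ |P i| + |C|`.
Since the `P i` share only `v₀`, `∑ |P i| ≤ t - 1 + |V(T) \ V(C)|`, and the two bounds combine.
-/

open Classical Finset

namespace SimpleGraph

variable {V : Type*} (G : SimpleGraph V)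

def ArcBound (T : Finset V) (g : V → ℕ) (n : ℕ) (E : List (Sym2 V)) : Prop :=
  ∀ y ∈ T, ∀ z ∈ T, y ≠ z → ∀ q : G.Walk y z, q.IsPath → q.edges ⊆ E → n ≤ g y + g z + q.length

variable {G}

theorem ArcBound.mono {T T' : Finset V} {g : V → ℕ} {n : ℕ} {E E' : List (Sym2 V)}
    (h : G.ArcBound T g n E) (hT : T' ⊆ T) (hE : E' ⊆ E) : G.ArcBound T' g n E' :=
  fun y hy z hz hyz q hq hqE => h y (hT hy) z (hT hz) hyz q hq fun _ he => hE (hqE he)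

namespace Walk

variable {u v w x : V}

theorem IsPath.append_of_forall_mem {p : G.Walk u v} {q : G.Walk v w} (hp : p.IsPath)
    (hq : q.IsPath) (h : ∀ x ∈ p.support, x ∈ q.support → x = v) : (p.append q).IsPath := by
  rw [isPath_def, support_append, List.nodup_append]
  refine ⟨hp.support_nodup, hq.support_nodup.tail, ?_⟩
  rintro x hx _ hx' rfl
  have hq' := hq.support_nodup
  rw [← cons_tail_support, List.nodup_cons] at hq'
  exact hq'.1 (h x hx (List.mem_of_mem_tail hx') ▸ hx')

theorem IsPath.exists_isCycle_edges_length_le_of_ne {p q : G.Walk u v} (hp : p.IsPath)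
    (hq : q.IsPath) (hpq : p ≠ q) :
    ∃ (w : V) (c : G.Walk w w), c.IsCycle ∧ (∀ e ∈ c.edges, e ∈ p.edges ∨ e ∈ q.edges) ∧
      c.length ≤ p.length + q.length := by
  obtain ⟨u', v', p', q', hp', hq', hc⟩ := hp.exists_isCycle_of_ne hq hpq
  refine ⟨u', _, hc, fun e he => ?_, ?_⟩
  · rw [edges_append, edges_reverse, List.mem_append, List.mem_reverse] at he
    exact he.imp (fun h => hp'.edges_subset h) (fun h => hq'.edges_subset h)
  · rw [length_append, length_reverse]
    exact add_le_add (length_le_of_isSubwalk hp') (length_le_of_isSubwalk hq')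

theorem IsPath.le_length_add_length_add_length {a b : V} {Pa : G.Walk u a} {Pb : G.Walk u b}
    {arc : G.Walk a b} (hPa : Pa.IsPath) (hPb : Pb.IsPath) (harc : arc.IsPath)
    (hmeet : ∀ x ∈ Pa.support, x ∈ arc.support → x = a) (ha : a ∉ Pb.support) {m : ℕ}
    (hgirth : ∀ (w : V) (c : G.Walk w w), c.IsCycle →
      (∀ e ∈ c.edges, e ∈ Pa.edges ∨ e ∈ arc.edges ∨ e ∈ Pb.edges) → m ≤ c.length) :
    m ≤ Pa.length + arc.length + Pb.length := by
  have hne : Pa.append arc ≠ Pb := by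
    rintro rfl
    exact ha ((mem_support_append_iff _ _).2 (Or.inr arc.start_mem_support))
  obtain ⟨w, c, hc, hcE, hcl⟩ :=
    (hPa.append_of_forall_mem harc hmeet).exists_isCycle_edges_length_le_of_ne hPb hne
  calc m ≤ c.length := hgirth w c hc fun e he => by
        simpa only [edges_append, List.mem_append, or_assoc] using hcE e he
    _ ≤ Pa.length + arc.length + Pb.length := by rwa [length_append] at hcl

theorem IsCycle.eq_or_eq_of_mem_support {p : G.Walk u v} {q : G.Walk v u}
    (h : (p.append q).IsCycle) (hp : x ∈ p.support) (hq : x ∈ q.support) : x = u ∨ x = v := by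
  have hd := h.support_nodup
  rw [tail_support_append, List.nodup_append'] at hd
  rcases p.mem_support_iff.1 hp with rfl | hp'
  · exact Or.inl rfl
  rcases q.mem_support_iff.1 hq with rfl | hq'
  · exact Or.inr rfl
  exact (hd.2.2 hp' hq').elim

variable [DecidableEq V]

theorem card_sum_filter_mem_support_append {p : G.Walk u v} {q : G.Walk v w} {T I : Finset V}
    (hT : ∀ x ∈ T, x ∈ (p.append q).support)
    (hI : T.filter (· ∈ p.support) ∩ T.filter (· ∈ q.support) = I) (g : V → ℕ) :
    #(T.filter (· ∈ p.support)) + #(T.filter (· ∈ q.support)) = #T + #I ∧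
      ∑ x ∈ T.filter (· ∈ p.support), g x + ∑ x ∈ T.filter (· ∈ q.support), g x =
        ∑ x ∈ T, g x + ∑ x ∈ I, g x := by
  have hunion : T.filter (· ∈ p.support) ∪ T.filter (· ∈ q.support) = T := by
    rw [← filter_or]
    exact filter_true_of_mem fun x hx => (mem_support_append_iff _ _).1 (hT x hx)
  rw [← hI, ← card_union_add_card_inter, ← sum_union_inter, hunion]
  exact ⟨rfl, rfl⟩

-- The arc bound summed over the `#T - 1` arcs into which `T` cuts `p`.
theorem IsPath.card_mul_add_le_of_arcBound {a b : V} {p : G.Walk a b} (hp : p.IsPath)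
    (hab : a ≠ b) {T : Finset V} (hT : ∀ x ∈ T, x ∈ p.support) (ha : a ∈ T) (hb : b ∈ T)
    {g : V → ℕ} {n : ℕ} (harc : G.ArcBound T g n p.edges) :
    #T * n + g a + g b ≤ 2 * ∑ x ∈ T, g x + p.length + n := by
  by_cases hm : ∃ m ∈ T, m ≠ a ∧ m ≠ b
  · obtain ⟨m, hmT, hma, hmb⟩ := hm
    have hmp := hT m hmT
    have hspec := p.take_spec hmp
    set T₁ := T.filter (· ∈ (p.takeUntil m hmp).support)
    set T₂ := T.filter (· ∈ (p.dropUntil m hmp).support)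
    have ih₁ := (hp.takeUntil hmp).card_mul_add_le_of_arcBound hma.symm (T := T₁)
      (fun x hx => (mem_filter.1 hx).2) (mem_filter.2 ⟨ha, start_mem_support _⟩)
      (mem_filter.2 ⟨hmT, end_mem_support _⟩)
      (harc.mono (filter_subset _ _) (p.edges_takeUntil_subset_edges hmp))
    have ih₂ := (hp.dropUntil hmp).card_mul_add_le_of_arcBound hmb (T := T₂)
      (fun x hx => (mem_filter.1 hx).2) (mem_filter.2 ⟨hmT, start_mem_support _⟩)
      (mem_filter.2 ⟨hb, end_mem_support _⟩)
      (harc.mono (filter_subset _ _) (p.edges_dropUntil_subset_edges hmp))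
    have hinter : T₁ ∩ T₂ = {m} := by
      ext x
      simp only [T₁, T₂, mem_inter, mem_filter, mem_singleton]
      refine ⟨fun ⟨⟨_, h₁⟩, _, h₂⟩ => ?_, ?_⟩
      · by_contra hxm
        exact (hspec ▸ hp).ne_of_mem_support_of_append hxm h₁ h₂ rfl
      · rintro rfl
        exact ⟨⟨hmT, end_mem_support _⟩, hmT, start_mem_support _⟩
    obtain ⟨hcard, hsum⟩ := card_sum_filter_mem_support_append (by rwa [hspec]) hinter g
    have hlen := congrArg length hspec
    rw [card_singleton] at hcard
    rw [sum_singleton] at hsum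
    rw [length_append] at hlen
    nlinarith
  · push Not at hm
    have hT2 : T = {a, b} := by
      ext x
      simp only [mem_insert, mem_singleton]
      exact ⟨fun hx => by by_contra! h; exact h.2 (hm x hx h.1), by rintro (rfl | rfl) <;> assumption⟩
    subst hT2
    rw [card_pair hab, sum_pair hab]
    have := harc a ha b hb hab p hp (List.Subset.refl _)
    omega
termination_by p.length
decreasing_by
  · exact length_takeUntil_lt_length hmp hmb
  · exact length_dropUntil_lt_length hmp hma

theorem IsCycle.card_mul_le_of_arcBound {r : V} {K : G.Walk r r} (hK : K.IsCycle) {T : Finset V}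
    (hT : ∀ x ∈ T, x ∈ K.support) (hT2 : T.Nontrivial) {g : V → ℕ} {n : ℕ}
    (harc : G.ArcBound T g n K.edges) : #T * n ≤ 2 * ∑ x ∈ T, g x + K.length := by
  obtain ⟨m₁, hm₁, m₂, hm₂, hne⟩ := hT2
  have hm₁K := hT m₁ hm₁
  set K' := K.rotate m₁ hm₁K
  have hTK' : ∀ x ∈ T, x ∈ K'.support := fun x hx => (mem_support_rotate_iff _ _ _).2 (hT x hx)
  have harc' : G.ArcBound T g n K'.edges :=
    harc.mono subset_rfl fun e he => (K.rotate_edges m₁ hm₁K).perm.mem_iff.1 he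
  have hm₂K' := hTK' m₂ hm₂
  have hspec := K'.take_spec hm₂K'
  have hcyc : ((K'.takeUntil m₂ hm₂K').append (K'.dropUntil m₂ hm₂K')).IsCycle := by
    rw [hspec]; exact hK.rotate hm₁K
  set T₁ := T.filter (· ∈ (K'.takeUntil m₂ hm₂K').support)
  set T₂ := T.filter (· ∈ (K'.dropUntil m₂ hm₂K').support)
  have h₁ := (hcyc.isPath_of_append_left (not_nil_of_ne hne.symm)).card_mul_add_le_of_arcBound
    hne (T := T₁) (fun x hx => (mem_filter.1 hx).2)
    (mem_filter.2 ⟨hm₁, start_mem_support _⟩) (mem_filter.2 ⟨hm₂, end_mem_support _⟩)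
    (harc'.mono (filter_subset _ _) (K'.edges_takeUntil_subset_edges hm₂K'))
  have h₂ := (hcyc.isPath_of_append_right (not_nil_of_ne hne)).card_mul_add_le_of_arcBound
    hne.symm (T := T₂) (fun x hx => (mem_filter.1 hx).2)
    (mem_filter.2 ⟨hm₂, start_mem_support _⟩) (mem_filter.2 ⟨hm₁, end_mem_support _⟩)
    (harc'.mono (filter_subset _ _) (K'.edges_dropUntil_subset_edges hm₂K'))
  have hinter : T₁ ∩ T₂ = {m₁, m₂} := by
    ext x
    simp only [T₁, T₂, mem_inter, mem_filter, mem_insert, mem_singleton]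
    refine ⟨fun ⟨⟨_, h₁⟩, _, h₂⟩ => hcyc.eq_or_eq_of_mem_support h₁ h₂, ?_⟩
    rintro (rfl | rfl)
    · exact ⟨⟨hm₁, start_mem_support _⟩, hm₁, end_mem_support _⟩
    · exact ⟨⟨hm₂, end_mem_support _⟩, hm₂, start_mem_support _⟩
  obtain ⟨hcard, hsum⟩ := card_sum_filter_mem_support_append (by rwa [hspec]) hinter g
  have hlen := congrArg length hspec
  rw [card_pair hne] at hcard
  rw [sum_pair hne] at hsum
  rw [length_append, length_rotate] at hlen
  nlinarith

end Walk

end SimpleGraph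

theorem Finset.sum_card_le_card_add_card_erase {ι α : Type*} [DecidableEq α] (s : Finset ι)
    (B : ι → Finset α) {A : Finset α} (a : α) (hBA : ∀ i ∈ s, B i ⊆ A)
    (hB : ∀ i ∈ s, ∀ j ∈ s, i ≠ j → ∀ x ∈ B i, x ∈ B j → x = a) :
    ∑ i ∈ s, #(B i) ≤ #s + #(A.erase a) := by
  have hdisj : (s : Set ι).PairwiseDisjoint fun i => (B i).erase a := by
    intro i hi j hj hij
    simp only [Function.onFun, disjoint_left, mem_erase]
    exact fun x hxi hxj => hxi.1 (hB i hi j hj hij x hxi.2 hxj.2)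
  calc ∑ i ∈ s, #(B i) ≤ ∑ i ∈ s, (#((B i).erase a) + 1) :=
        sum_le_sum fun i _ => Nat.sub_le_iff_le_add.1 pred_card_le_card_erase
    _ = #s + #(s.biUnion fun i => (B i).erase a) := by
        rw [sum_add_distrib, card_biUnion hdisj, sum_const, smul_eq_mul, mul_one, add_comm]
    _ ≤ #s + #(A.erase a) := by
        gcongr
        exact biUnion_subset.2 fun i hi => erase_subset_erase a (hBA i hi)

section Fan

open SimpleGraph Walk

variable {V ι : Type*} {G : SimpleGraph V} [Fintype ι] {c v₀ : V} {C : G.Walk c c} {x : ι → V}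
  {P : (i : ι) → G.Walk v₀ (x i)}

theorem arcBound_of_fan (hxinj : Function.Injective x) (hx : ∀ i, x i ∈ C.support)
    (hP : ∀ i, (P i).IsPath) (hinternal : ∀ i, ∀ u ∈ (P i).support, u ≠ x i → u ∉ C.support)
    (hgirth : ∀ (u : V) (w : G.Walk u u), w.IsCycle →
      (∀ e ∈ w.edges, e ∈ C.edges ∨ ∃ i, e ∈ (P i).edges) → C.length ≤ w.length) :
    G.ArcBound (univ.image x) (Function.extend x (fun i => (P i).length) 0) C.length C.edges := by
  rintro _ hy _ hz hyz q hq hqC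
  obtain ⟨i, -, rfl⟩ := mem_image.1 hy
  obtain ⟨j, -, rfl⟩ := mem_image.1 hz
  rw [hxinj.extend_apply, hxinj.extend_apply]
  have hqC' : ∀ v ∈ q.support, v ∈ C.support := fun v hv => by
    rcases mem_support_iff_exists_mem_edges.1 hv with rfl | ⟨e, he, hve⟩
    · exact hx j
    · exact mem_support_of_mem_edges (hqC he) hve
  have hPC : ∀ k, ∀ v ∈ (P k).support, v ∈ C.support → v = x k := fun k v hv hvC =>
    by_contra fun h => hinternal k v hv h hvC
  have := (hP i).le_length_add_length_add_length (hP j) hq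
    (fun v hv hvq => hPC i v hv (hqC' v hvq)) (fun h => hyz (hPC j _ h (hx i)))
    fun w c hc hcE => hgirth w c hc fun e he =>
      (hcE e he).elim (fun h => Or.inr ⟨i, h⟩) (Or.imp (hqC ·) fun h => ⟨j, h⟩)
  omega

theorem sum_length_lt_of_fan (hP : ∀ i, (P i).IsPath)
    (hdisj : ∀ i j, i ≠ j → ∀ u, u ∈ (P i).support → u ∈ (P j).support → u = v₀)
    {A : Finset V} (hA : ∀ i, ∀ u ∈ (P i).support, u ≠ x i → u ∈ A) (hv₀ : v₀ ∈ A) :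
    ∑ i, (P i).length < Fintype.card ι + #A := by
  have hcard : ∀ i, #((P i).support.toFinset.erase (x i)) = (P i).length := fun i => by
    rw [card_erase_of_mem (List.mem_toFinset.2 (end_mem_support _)),
      List.toFinset_card_of_nodup (hP i).support_nodup, length_support, Nat.add_sub_cancel]
  have hsum := sum_card_le_card_add_card_erase univ (fun i => (P i).support.toFinset.erase (x i))
    v₀ (fun i _ u hu => hA i u (List.mem_toFinset.1 (mem_of_mem_erase hu)) (ne_of_mem_erase hu))
    (fun i _ j _ hij u hui huj => hdisj i j hij u (List.mem_toFinset.1 (mem_of_mem_erase hui))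
      (List.mem_toFinset.1 (mem_of_mem_erase huj)))
  simp only [hcard, card_univ] at hsum
  rw [card_erase_of_mem hv₀] at hsum
  have := card_pos.2 ⟨v₀, hv₀⟩
  omega

end Fan

/-- Let `T` be a `t`-fan (`t ≥ 2`): a union of `t` pairwise internally disjoint paths
`P₁, …, P_t` from a common vertex `v₀ ∉ V(C)` to distinct vertices `x₁, …, x_t` of a
cycle `C`, with all internal vertices avoiding `C`. If every cycle of the graph `T ∪ C`
has length at least `|C|`, then `|V(T) \ V(C)| ≥ (t-1)|C|/2 - (t-1)`. -/
theorem stmt14 {V : Type*} [Fintype V] (G : SimpleGraph V) (c : V) (C : G.Walk c c)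
    (hC : C.IsCycle) (t : ℕ) (ht : 2 ≤ t) (v₀ : V) (hv₀ : v₀ ∉ C.support)
    (x : Fin t → V) (hxinj : Function.Injective x) (hx : ∀ i, x i ∈ C.support)
    (P : (i : Fin t) → G.Walk v₀ (x i)) (hP : ∀ i, (P i).IsPath)
    (hinternal : ∀ i, ∀ u ∈ (P i).support, u ≠ x i → u ∉ C.support)
    (hdisj : ∀ i j, i ≠ j →
      ∀ u, u ∈ (P i).support → u ∈ (P j).support → u = v₀)
    (hgirth : ∀ (u : V) (w : G.Walk u u), w.IsCycle →
      (∀ e ∈ w.edges, e ∈ C.edges ∨ ∃ i, e ∈ (P i).edges) → C.length ≤ w.length) :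
    ((t : ℚ) - 1) * C.length / 2 - ((t : ℚ) - 1) ≤
      ((univ.filter fun v : V =>
        (∃ i, v ∈ (P i).support) ∧ v ∉ C.support).card : ℚ) := by
  set A := univ.filter fun v : V => (∃ i, v ∈ (P i).support) ∧ v ∉ C.support
  have hcard : #(univ.image x) = t := by
    rw [card_image_of_injective _ hxinj, card_univ, Fintype.card_fin]
  have hcycle := hC.card_mul_le_of_arcBound
    (fun v hv => by obtain ⟨i, -, rfl⟩ := mem_image.1 hv; exact hx i)
    (one_lt_card_iff_nontrivial.1 (by omega)) (arcBound_of_fan hxinj hx hP hinternal hgirth)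
  rw [hcard, sum_image fun i _ j _ h => hxinj h] at hcycle
  simp only [hxinj.extend_apply] at hcycle
  have hcount := sum_length_lt_of_fan hP hdisj (A := A)
    (fun i u hu hux => mem_filter.2 ⟨mem_univ _, ⟨i, hu⟩, hinternal i u hu hux⟩)
    (mem_filter.2 ⟨mem_univ _, ⟨⟨0, by omega⟩, (P _).start_mem_support⟩, hv₀⟩)
  rw [Fintype.card_fin] at hcount
  have hcycle' : (t : ℚ) * C.length ≤ 2 * ∑ i, ((P i).length : ℚ) + C.length := by
    exact_mod_cast hcycle
  have hcount' : ∑ i, ((P i).length : ℚ) + 1 ≤ t + #A := by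
    exact_mod_cast Nat.add_one_le_iff.2 hcount
  linarith
end
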